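/- For each integer n ≥ 1, let H_n = R₀ + (R₁ ∪ ⋯ ∪ R_{2n+1}), where R₀ is a complete graph of order n and each Rᵢ (1 ≤ i ≤ 2n+1) is isomorphic to K₁ + (K₄ ∪ 2K₂). Then for every X ⊆ V(H_n), c₁(H_n−X) + c₃(H_n−X) + c₅(H_n−X) + c₇(H_n−X) ≤ (2/3)·|X| + 1/3. -/
import Mathlib

open SimpleGraph

/-- `cCount G X i` is the number of connected components of `G − X` with exactly `i` vertices. -/
noncomputable def cCount {V : Type*} (G : SimpleGraph V) (X : Set V) (i : ℕ) : ℕ :=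
  Nat.card {C : (G.induce Xᶜ).ConnectedComponent // Nat.card C.supp = i}

/-- The vertices of `K₁ + (K₄ ∪ 2K₂)`: `none` is the join vertex, `some (Sum.inl a)` the
vertices of the `K₄`, and `some (Sum.inr (i, b))` the vertices of the two extra edges. -/
abbrev RVert := Option (Fin 4 ⊕ (Fin 2 × Fin 2))

/-- The graph `K₁ + (K₄ ∪ 2K₂)`. -/
def Rgraph : SimpleGraph RVert :=
  SimpleGraph.fromRel (fun x y =>
    x = none ∨ (∃ a b : Fin 4, x = some (Sum.inl a) ∧ y = some (Sum.inl b)) ∨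
    (∃ i : Fin 2, x = some (Sum.inr (i, 0)) ∧ y = some (Sum.inr (i, 1))))

/-- The vertices of `H_n = K_n + (2n+1)(K₁ + (K₄ ∪ 2K₂))`. -/
abbrev HVert (n : ℕ) := Fin n ⊕ (Fin (2 * n + 1) × RVert)

/-- The graph `H_n = R₀ + (R₁ ∪ ⋯ ∪ R_{2n+1})`, where `R₀ = K_n` and each `Rᵢ` is a copy
of `K₁ + (K₄ ∪ 2K₂)`. -/
def Hgraph (n : ℕ) : SimpleGraph (HVert n) :=
  SimpleGraph.fromRel (fun x y =>
    (∃ a b : Fin n, x = Sum.inl a ∧ y = Sum.inl b) ∨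
    (∃ (a : Fin n) (p : Fin (2 * n + 1) × RVert), x = Sum.inl a ∧ y = Sum.inr p) ∨
    (∃ (i : Fin (2 * n + 1)) (u w : RVert),
      x = Sum.inr (i, u) ∧ y = Sum.inr (i, w) ∧ Rgraph.Adj u w))

/-! ### Auxiliary definitions -/

/-- Flip a `Fin 2`. -/
def flp : Fin 2 → Fin 2 := fun b => if b = 0 then 1 else 0

/-- A labelling of the vertices of one copy of `R`, relative to a deleted set `Y`:
two surviving vertices get the same label iff they are in the same component of `R − Y`. -/
def lab0 (Y : RVert → Bool) : RVert → RVert := fun r =>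
  if Y none = false then none else
  match r with
  | none => none
  | some (Sum.inl _) => some (Sum.inl 0)
  | some (Sum.inr (j, b)) =>
      if Y (some (Sum.inr (j, flp b))) then some (Sum.inr (j, b)) else some (Sum.inr (j, 0))

/-- The relation defining `Rgraph`. -/
abbrev Rrel : RVert → RVert → Prop := fun x y =>
  x = none ∨ (∃ a b : Fin 4, x = some (Sum.inl a) ∧ y = some (Sum.inl b)) ∨
    (∃ i : Fin 2, x = some (Sum.inr (i, 0)) ∧ y = some (Sum.inr (i, 1)))

instance Rrel.decidableRel : ∀ x y : RVert, Decidable (Rrel x y) := fun x y =>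
  inferInstanceAs (Decidable (x = none ∨ (∃ a b : Fin 4, x = some (Sum.inl a) ∧
    y = some (Sum.inl b)) ∨ (∃ i : Fin 2, x = some (Sum.inr (i, 0)) ∧
    y = some (Sum.inr (i, 1)))))

lemma Rgraph_adj (r r' : RVert) : Rgraph.Adj r r' ↔ r ≠ r' ∧ (Rrel r r' ∨ Rrel r' r) :=
  Iff.rfl

/-- Labels of the counted (odd, small) components in one copy. -/
def labSet (Y : RVert → Bool) : Finset RVert :=
  Finset.univ.filter (fun ℓ : RVert =>
    (Finset.univ.filter (fun r => Y r = false ∧ lab0 Y r = ℓ)).card ∈ ({1, 3, 5, 7} : Finset ℕ))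

set_option maxRecDepth 100000 in
set_option maxHeartbeats 4000000 in
set_option synthInstance.maxHeartbeats 2000000 in
set_option synthInstance.maxSize 1024 in
lemma lab0_adj : ∀ (Y : RVert → Bool) (r r' : RVert), Y r = false → Y r' = false →
    (r ≠ r' ∧ (Rrel r r' ∨ Rrel r' r)) → lab0 Y r = lab0 Y r' := by decide

set_option maxRecDepth 100000 in
set_option maxHeartbeats 4000000 in
set_option synthInstance.maxHeartbeats 2000000 in
set_option synthInstance.maxSize 1024 in
lemma lab0_eq : ∀ (Y : RVert → Bool) (r r' : RVert), Y r = false → Y r' = false →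
    lab0 Y r = lab0 Y r' →
    r = r' ∨ (r ≠ r' ∧ (Rrel r r' ∨ Rrel r' r)) ∨ (Y none = false ∧ r ≠ none ∧ r' ≠ none) := by
  decide

set_option maxRecDepth 100000 in
set_option maxHeartbeats 16000000 in
lemma copy_bound : ∀ Y : RVert → Bool,
    3 * (labSet Y).card ≤ 2 * (Finset.univ.filter (fun r => Y r = true)).card + 1 := by
  decide

/-! ### The labelling of `H_n` -/

/-- Whether a vertex of copy `i` belongs to `X`. -/
noncomputable def Ybool (n : ℕ) (X : Set (HVert n)) (i : Fin (2 * n + 1)) (r : RVert) : Bool :=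
  @decide (Sum.inr (i, r) ∈ X) (Classical.propDecidable _)

lemma Ybool_false_iff {n : ℕ} {X : Set (HVert n)} {i : Fin (2 * n + 1)} {r : RVert} :
    Ybool n X i r = false ↔ Sum.inr (i, r) ∉ X := by
  simp [Ybool]

lemma Ybool_true_iff {n : ℕ} {X : Set (HVert n)} {i : Fin (2 * n + 1)} {r : RVert} :
    Ybool n X i r = true ↔ Sum.inr (i, r) ∈ X := by
  simp [Ybool]

/-- The global labelling of the vertices of `H_n`. -/
noncomputable def Lab (n : ℕ) (X : Set (HVert n)) : HVert n → Fin (2 * n + 1) × RVert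
  | Sum.inl _ => (⟨0, by omega⟩, none)
  | Sum.inr (i, r) => (i, lab0 (Ybool n X i) r)

/-! ### Adjacency lemmas for `Hgraph` -/

lemma Hadj_inr {n : ℕ} {i i' : Fin (2 * n + 1)} {r r' : RVert}
    (h : (Hgraph n).Adj (Sum.inr (i, r)) (Sum.inr (i', r'))) : i' = i ∧ Rgraph.Adj r r' := by
  obtain ⟨hne, h | h⟩ := h <;>
    rcases h with ⟨a, b, h1, h2⟩ | ⟨a, p, h1, h2⟩ | ⟨j, u, w, h1, h2, hadj⟩
  · exact absurd h1 (by simp)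
  · exact absurd h1 (by simp)
  · simp only [Sum.inr.injEq, Prod.mk.injEq] at h1 h2
    obtain ⟨rfl, rfl⟩ := h1
    obtain ⟨rfl, rfl⟩ := h2
    exact ⟨rfl, hadj⟩
  · exact absurd h1 (by simp)
  · exact absurd h1 (by simp)
  · simp only [Sum.inr.injEq, Prod.mk.injEq] at h1 h2
    obtain ⟨rfl, rfl⟩ := h1
    obtain ⟨rfl, rfl⟩ := h2
    exact ⟨rfl, hadj.symm⟩

lemma Hadj_inr_of {n : ℕ} (i : Fin (2 * n + 1)) {r r' : RVert} (h : Rgraph.Adj r r') :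
    (Hgraph n).Adj (Sum.inr (i, r)) (Sum.inr (i, r')) := by
  refine ⟨?_, Or.inl (Or.inr (Or.inr ⟨i, r, r', rfl, rfl, h⟩))⟩
  intro hc
  exact h.ne (by simpa using hc)

lemma Hadj_inl {n : ℕ} (a : Fin n) (w : HVert n) (hw : Sum.inl a ≠ w) :
    (Hgraph n).Adj (Sum.inl a) w := by
  refine ⟨hw, Or.inl ?_⟩
  cases w with
  | inl b => exact Or.inl ⟨a, b, rfl, rfl⟩
  | inr p => exact Or.inr (Or.inl ⟨a, p, rfl, rfl⟩)

/-! ### Labels and components -/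

variable {n : ℕ} {X : Set (HVert n)}

lemma lab_adj (hX : ∀ a : Fin n, Sum.inl a ∈ X) {u v : HVert n} (hu : u ∉ X) (hv : v ∉ X)
    (h : (Hgraph n).Adj u v) : Lab n X u = Lab n X v := by
  cases u with
  | inl a => exact absurd (hX a) hu
  | inr p =>
    cases v with
    | inl a => exact absurd (hX a) hv
    | inr q =>
      obtain ⟨i, r⟩ := p
      obtain ⟨i', r'⟩ := q
      obtain ⟨hii, hadj⟩ := Hadj_inr h
      subst hii
      simp only [Lab, Prod.mk.injEq]
      exact ⟨trivial, lab0_adj _ _ _ (Ybool_false_iff.mpr hu) (Ybool_false_iff.mpr hv)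
        ((Rgraph_adj _ _).mp hadj)⟩

lemma lab_reach (hX : ∀ a : Fin n, Sum.inl a ∈ X) {u v : HVert n} (hu : u ∈ Xᶜ) (hv : v ∈ Xᶜ)
    (h : Lab n X u = Lab n X v) :
    ((Hgraph n).induce Xᶜ).Reachable ⟨u, hu⟩ ⟨v, hv⟩ := by
  cases u with
  | inl a => exact absurd (hX a) hu
  | inr p =>
    cases v with
    | inl a => exact absurd (hX a) hv
    | inr q =>
      obtain ⟨i, r⟩ := p
      obtain ⟨i', r'⟩ := q
      have hi : i = i' := congrArg Prod.fst h
      subst hi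
      have h2 : lab0 (Ybool n X i) r = lab0 (Ybool n X i) r' := congrArg Prod.snd h
      rcases lab0_eq (Ybool n X i) r r' (Ybool_false_iff.mpr hu) (Ybool_false_iff.mpr hv) h2 with
        rfl | hadj | ⟨hhub, hr, hr'⟩
      · rfl
      · exact Adj.reachable
          (show (Hgraph n).Adj (Sum.inr (i, r)) (Sum.inr (i, r')) from
            Hadj_inr_of i ((Rgraph_adj r r').mpr hadj))
      · have hh : (Sum.inr (i, (none : RVert)) : HVert n) ∈ Xᶜ := Ybool_false_iff.mp hhub
        have a1 : (Hgraph n).Adj (Sum.inr (i, r)) (Sum.inr (i, (none : RVert))) :=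
          Hadj_inr_of i ((Rgraph_adj r none).mpr ⟨hr, Or.inr (Or.inl rfl)⟩)
        have a2 : (Hgraph n).Adj (Sum.inr (i, (none : RVert))) (Sum.inr (i, r')) :=
          Hadj_inr_of i ((Rgraph_adj none r').mpr ⟨fun hc => hr' hc.symm, Or.inl (Or.inl rfl)⟩)
        exact Reachable.trans
          (Adj.reachable (show ((Hgraph n).induce Xᶜ).Adj ⟨_, hu⟩ ⟨_, hh⟩ from a1))
          (Adj.reachable (show ((Hgraph n).induce Xᶜ).Adj ⟨_, hh⟩ ⟨_, hv⟩ from a2))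

/-- The fibre of the labelling over label `ℓ`, intersected with the complement of `X`. -/
def fibSet (n : ℕ) (X : Set (HVert n)) (ℓ : Fin (2 * n + 1) × RVert) : Set (HVert n) :=
  {v | v ∉ X ∧ Lab n X v = ℓ}

/-- The set of labels of counted components. -/
def Aset (n : ℕ) (X : Set (HVert n)) : Set (Fin (2 * n + 1) × RVert) :=
  {ℓ | (fibSet n X ℓ).ncard ∈ ({1, 3, 5, 7} : Set ℕ)}

lemma fib_ncard (hX : ∀ a : Fin n, Sum.inl a ∈ X) (i : Fin (2 * n + 1)) (ℓ₂ : RVert) :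
    (fibSet n X (i, ℓ₂)).ncard =
      (Finset.univ.filter (fun r => Ybool n X i r = false ∧ lab0 (Ybool n X i) r = ℓ₂)).card := by
  have himg : fibSet n X (i, ℓ₂) = (fun r : RVert => (Sum.inr (i, r) : HVert n)) ''
      ↑(Finset.univ.filter (fun r => Ybool n X i r = false ∧ lab0 (Ybool n X i) r = ℓ₂)) := by
    ext v
    constructor
    · rintro ⟨hv, hL⟩
      cases v with
      | inl a => exact absurd (hX a) hv
      | inr p =>
        obtain ⟨i', r⟩ := p
        have hi : i' = i := congrArg Prod.fst hL
        subst hi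
        refine ⟨r, ?_, rfl⟩
        simp only [Finset.coe_filter, Finset.mem_univ, true_and, Set.mem_setOf_eq]
        exact ⟨Ybool_false_iff.mpr hv, congrArg Prod.snd hL⟩
    · rintro ⟨r, hr, rfl⟩
      simp only [Finset.coe_filter, Finset.mem_univ, true_and, Set.mem_setOf_eq] at hr
      exact ⟨Ybool_false_iff.mp hr.1, by show (i, lab0 (Ybool n X i) r) = (i, ℓ₂); rw [hr.2]⟩
  rw [himg, Set.ncard_image_of_injective _ (fun a b hab => by simpa using hab),
    Set.ncard_coe_finset]

lemma Xcard_eq (hX : ∀ a : Fin n, Sum.inl a ∈ X) :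
    X.ncard = n + ∑ i : Fin (2 * n + 1),
      (Finset.univ.filter (fun r => Ybool n X i r = true)).card := by
  classical
  have hfin : X.Finite := Set.toFinite X
  rw [Set.ncard_eq_toFinset_card X hfin]
  set idx : HVert n → Option (Fin (2 * n + 1)) :=
    Sum.elim (fun _ => (none : Option (Fin (2 * n + 1)))) (fun p => some p.1) with hidx
  rw [Finset.card_eq_sum_card_fiberwise
    (f := idx) (t := Finset.univ) (fun x _ => Finset.mem_univ _)]
  rw [Fintype.sum_option (fun o => (hfin.toFinset.filter (fun v => idx v = o)).card)]
  congr 1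
  · have himg : hfin.toFinset.filter (fun v => idx v = none)
        = Finset.univ.image (Sum.inl : Fin n → HVert n) := by
      ext v
      cases v with
      | inl a => simpa [hidx] using hX a
      | inr p => simp [hidx]
    rw [himg, Finset.card_image_of_injective _ Sum.inl_injective, Finset.card_univ,
      Fintype.card_fin]
  · refine Finset.sum_congr rfl fun i _ => ?_
    have himg : hfin.toFinset.filter (fun v => idx v = some i)
        = (Finset.univ.filter (fun r => Ybool n X i r = true)).image
            (fun r => (Sum.inr (i, r) : HVert n)) := by
      ext v
      cases v with
      | inl a => simp [hidx]
      | inr p =>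
        obtain ⟨j, r⟩ := p
        simp only [Set.Finite.mem_toFinset, Finset.mem_filter, hidx, Sum.elim_inr,
          Option.some.injEq, Finset.mem_image, Finset.mem_univ, true_and, Ybool_true_iff]
        constructor
        · rintro ⟨hv, rfl⟩
          exact ⟨r, hv, rfl⟩
        · rintro ⟨r', hr', heq⟩
          obtain ⟨rfl, rfl⟩ : i = j ∧ r' = r := by simpa using heq
          exact ⟨hr', rfl⟩
    rw [himg, Finset.card_image_of_injective _ (fun a b h => by simpa using h)]

lemma Aset_bound (hX : ∀ a : Fin n, Sum.inl a ∈ X) :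
    3 * (Aset n X).ncard ≤ 2 * X.ncard + 1 := by
  classical
  have hfinA : (Aset n X).Finite := Set.toFinite _
  rw [Set.ncard_eq_toFinset_card _ hfinA]
  rw [Finset.card_eq_sum_card_fiberwise
    (f := fun ℓ : Fin (2 * n + 1) × RVert => ℓ.1) (t := Finset.univ)
    (fun x _ => Finset.mem_univ _)]
  have hper : ∀ i : Fin (2 * n + 1),
      (hfinA.toFinset.filter (fun ℓ => ℓ.1 = i)).card = (labSet (Ybool n X i)).card := by
    intro i
    have himg : hfinA.toFinset.filter (fun ℓ => ℓ.1 = i)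
        = (labSet (Ybool n X i)).image (fun ℓ₂ => (i, ℓ₂)) := by
      ext ⟨j, ℓ₂⟩
      simp only [Finset.mem_filter, Set.Finite.mem_toFinset, Finset.mem_image]
      constructor
      · rintro ⟨hA, rfl⟩
        refine ⟨ℓ₂, ?_, rfl⟩
        have hA' : (fibSet n X (j, ℓ₂)).ncard ∈ ({1, 3, 5, 7} : Set ℕ) := hA
        rw [fib_ncard hX] at hA'
        simp only [labSet, Finset.mem_filter, Finset.mem_univ, true_and]
        simpa using hA'
      · rintro ⟨b, hb, heq⟩
        obtain ⟨rfl, rfl⟩ : i = j ∧ b = ℓ₂ := by simpa using heq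
        simp only [labSet, Finset.mem_filter, Finset.mem_univ, true_and] at hb
        refine ⟨?_, rfl⟩
        show (fibSet n X (i, b)).ncard ∈ ({1, 3, 5, 7} : Set ℕ)
        rw [fib_ncard hX]
        simpa using hb
    rw [himg, Finset.card_image_of_injective _ (fun a b h => by simpa using h)]
  calc 3 * ∑ i : Fin (2 * n + 1), (hfinA.toFinset.filter (fun ℓ => ℓ.1 = i)).card
      = ∑ i : Fin (2 * n + 1), 3 * (labSet (Ybool n X i)).card := by
        rw [Finset.mul_sum]
        exact Finset.sum_congr rfl fun i _ => by rw [hper i]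
    _ ≤ ∑ i : Fin (2 * n + 1),
          (2 * (Finset.univ.filter (fun r => Ybool n X i r = true)).card + 1) :=
        Finset.sum_le_sum fun i _ => copy_bound (Ybool n X i)
    _ = 2 * (∑ i : Fin (2 * n + 1),
          (Finset.univ.filter (fun r => Ybool n X i r = true)).card) + (2 * n + 1) := by
        rw [Finset.sum_add_distrib, ← Finset.mul_sum]
        simp
    _ = 2 * X.ncard + 1 := by
        rw [Xcard_eq hX]
        ring

lemma comp_card_eq (hX : ∀ a : Fin n, Sum.inl a ∈ X) :
    cCount (Hgraph n) X 1 + cCount (Hgraph n) X 3 + cCount (Hgraph n) X 5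
        + cCount (Hgraph n) X 7 = (Aset n X).ncard := by
  classical
  set G' := (Hgraph n).induce Xᶜ with hG'
  have key1 : ∀ u v : ↥Xᶜ, G'.Adj u v → Lab n X u.1 = Lab n X v.1 := fun u v h =>
    lab_adj hX u.2 v.2 h
  have walklab : ∀ u v : ↥Xᶜ, G'.Reachable u v → Lab n X u.1 = Lab n X v.1 := by
    intro u v h
    obtain ⟨p⟩ := h
    induction p with
    | nil => rfl
    | cons hadj p ih => exact (key1 _ _ hadj).trans ih
  have mk_eq : ∀ u v : ↥Xᶜ, (G'.connectedComponentMk u = G'.connectedComponentMk v) ↔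
      Lab n X u.1 = Lab n X v.1 := fun u v =>
    ⟨fun h => walklab u v (ConnectedComponent.exact h),
     fun h => ConnectedComponent.sound (lab_reach hX u.2 v.2 h)⟩
  set g : G'.ConnectedComponent → Fin (2 * n + 1) × RVert :=
    ConnectedComponent.lift (fun u => Lab n X u.1) (fun u v p _ => walklab u v ⟨p⟩) with hg
  have g_mk : ∀ u : ↥Xᶜ, g (G'.connectedComponentMk u) = Lab n X u.1 := fun u => rfl
  have g_inj : Function.Injective g := by
    intro C D
    refine ConnectedComponent.ind₂ (fun u v h => ?_) C D
    exact (mk_eq u v).mpr h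
  have supp_card : ∀ C : G'.ConnectedComponent, Nat.card C.supp = (fibSet n X (g C)).ncard := by
    refine ConnectedComponent.ind fun u => ?_
    have himg : Subtype.val '' ((G'.connectedComponentMk u).supp) = fibSet n X (Lab n X u.1) := by
      ext v
      simp only [Set.mem_image, ConnectedComponent.mem_supp_iff, fibSet, Set.mem_setOf_eq]
      constructor
      · rintro ⟨w, hw, rfl⟩
        exact ⟨w.2, (mk_eq w u).mp hw⟩
      · rintro ⟨hv, hL⟩
        exact ⟨⟨v, hv⟩, (mk_eq ⟨v, hv⟩ u).mpr hL, rfl⟩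
    rw [g_mk]
    calc Nat.card (G'.connectedComponentMk u).supp
        = ((G'.connectedComponentMk u).supp).ncard := Nat.card_coe_set_eq _
      _ = (Subtype.val '' ((G'.connectedComponentMk u).supp)).ncard :=
          (Set.ncard_image_of_injective _ Subtype.val_injective).symm
      _ = _ := by rw [himg]
  have hgA : g '' {C : G'.ConnectedComponent | Nat.card C.supp ∈ ({1, 3, 5, 7} : Set ℕ)}
      = Aset n X := by
    ext ℓ
    constructor
    · rintro ⟨C, hC, rfl⟩
      show (fibSet n X (g C)).ncard ∈ ({1, 3, 5, 7} : Set ℕ)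
      rw [← supp_card C]
      exact hC
    · intro hl
      have hl' : (fibSet n X ℓ).ncard ∈ ({1, 3, 5, 7} : Set ℕ) := hl
      have h0 : (fibSet n X ℓ).ncard ≠ 0 := by
        simp only [Set.mem_insert_iff, Set.mem_singleton_iff] at hl'
        omega
      obtain ⟨v, hv, hL⟩ := Set.nonempty_of_ncard_ne_zero h0
      refine ⟨G'.connectedComponentMk ⟨v, hv⟩, ?_, ?_⟩
      · show Nat.card (G'.connectedComponentMk ⟨v, hv⟩).supp ∈ ({1, 3, 5, 7} : Set ℕ)
        rw [supp_card, g_mk, hL]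
        exact hl'
      · rw [g_mk]
        exact hL
  have hS : {C : G'.ConnectedComponent | Nat.card C.supp ∈ ({1, 3, 5, 7} : Set ℕ)}.ncard
      = (Aset n X).ncard := by
    rw [← hgA, Set.ncard_image_of_injective _ g_inj]
  have hcC : ∀ i : ℕ, cCount (Hgraph n) X i
      = {C : G'.ConnectedComponent | Nat.card C.supp = i}.ncard := fun i =>
    Nat.card_coe_set_eq _
  have hdisj : ∀ (a b : ℕ), a ≠ b →
      Disjoint {C : G'.ConnectedComponent | Nat.card C.supp = a}
        {C : G'.ConnectedComponent | Nat.card C.supp = b} := fun a b hab =>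
    Set.disjoint_left.mpr fun C hC1 hC2 => hab (hC1.symm.trans hC2)
  have hunion : {C : G'.ConnectedComponent | Nat.card C.supp ∈ ({1, 3, 5, 7} : Set ℕ)} =
      {C : G'.ConnectedComponent | Nat.card C.supp = 1} ∪ {C | Nat.card C.supp = 3}
        ∪ {C | Nat.card C.supp = 5} ∪ {C | Nat.card C.supp = 7} := by
    ext C
    simp only [Set.mem_setOf_eq, Set.mem_union, Set.mem_insert_iff, Set.mem_singleton_iff]
    tauto
  rw [hcC, hcC, hcC, hcC, ← hS, hunion]
  rw [Set.ncard_union_eq (by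
      refine Set.disjoint_union_left.mpr ⟨Set.disjoint_union_left.mpr ⟨?_, ?_⟩, ?_⟩ <;>
        exact hdisj _ _ (by norm_num)) (Set.toFinite _) (Set.toFinite _),
    Set.ncard_union_eq (by
      refine Set.disjoint_union_left.mpr ⟨?_, ?_⟩ <;> exact hdisj _ _ (by norm_num))
      (Set.toFinite _) (Set.toFinite _),
    Set.ncard_union_eq (hdisj _ _ (by norm_num)) (Set.toFinite _) (Set.toFinite _)]

/-- Lemma 6.1: for every `X ⊆ V(H_n)`,
`c₁(H_n−X) + c₃(H_n−X) + c₅(H_n−X) + c₇(H_n−X) ≤ (2/3)|X| + 1/3`. -/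
theorem Hgraph_component_bound (n : ℕ) (hn : 1 ≤ n) (X : Set (HVert n)) :
    (cCount (Hgraph n) X 1 : ℚ) + (cCount (Hgraph n) X 3 : ℚ)
        + (cCount (Hgraph n) X 5 : ℚ) + (cCount (Hgraph n) X 7 : ℚ)
      ≤ (2 / 3) * (X.ncard : ℚ) + 1 / 3 := by
  classical
  rcases Classical.em (∀ a : Fin n, Sum.inl a ∈ X) with hX | hX
  · -- all of the central clique is deleted
    have h3 : 3 * (cCount (Hgraph n) X 1 + cCount (Hgraph n) X 3 + cCount (Hgraph n) X 5
        + cCount (Hgraph n) X 7) ≤ 2 * X.ncard + 1 := by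
      rw [comp_card_eq hX]
      exact Aset_bound hX
    have h3' := (Nat.cast_le (α := ℚ)).mpr h3
    push_cast at h3'
    linarith
  · -- some clique vertex survives: the graph minus X is connected
    push_neg at hX
    obtain ⟨a, ha⟩ := hX
    set G' := (Hgraph n).induce Xᶜ with hG'
    have ha' : (Sum.inl a : HVert n) ∈ Xᶜ := ha
    have hreach : ∀ u : ↥Xᶜ, G'.Reachable ⟨Sum.inl a, ha'⟩ u := by
      rintro ⟨w, hw⟩
      by_cases hwa : (Sum.inl a : HVert n) = w
      · subst hwa
        exact Reachable.refl _
      · exact Adj.reachable (show (Hgraph n).Adj (Sum.inl a) w from Hadj_inl a w hwa)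
    have hall : ∀ C : G'.ConnectedComponent, C = G'.connectedComponentMk ⟨Sum.inl a, ha'⟩ := by
      refine ConnectedComponent.ind fun u => ?_
      exact (ConnectedComponent.sound (hreach u)).symm
    have hle : ∀ i : ℕ, cCount (Hgraph n) X i ≤ 1 := by
      intro i
      haveI hsub : Subsingleton {C : G'.ConnectedComponent // Nat.card C.supp = i} :=
        ⟨fun C D => Subtype.ext ((hall C.1).trans (hall D.1).symm)⟩
      rcases isEmpty_or_nonempty {C : G'.ConnectedComponent // Nat.card C.supp = i} with he | hne
      · rw [cCount, Nat.card_of_isEmpty]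
        omega
      · rw [cCount, Nat.card_unique]
    have htot : X.ncard + (Xᶜ).ncard = 19 * n + 9 := by
      rw [Set.ncard_add_ncard_compl X]
      rw [Nat.card_eq_fintype_card]
      simp only [HVert, Fintype.card_sum, Fintype.card_prod, Fintype.card_fin,
        Fintype.card_option]
      have : Fintype.card RVert = 9 := by rfl
      omega
    have hkey : ¬(cCount (Hgraph n) X 1 = 0 ∧ cCount (Hgraph n) X 3 = 0
        ∧ cCount (Hgraph n) X 5 = 0 ∧ cCount (Hgraph n) X 7 = 0) → 21 ≤ X.ncard := by
      intro hne
      have hex : ∃ i, i ≤ 7 ∧ cCount (Hgraph n) X i ≠ 0 := by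
        by_contra hcon
        push_neg at hcon
        exact hne ⟨hcon 1 (by norm_num), hcon 3 (by norm_num), hcon 5 (by norm_num),
          hcon 7 (by norm_num)⟩
      obtain ⟨i, hi7, hi⟩ := hex
      rw [cCount] at hi
      have hne' : Nonempty {C : G'.ConnectedComponent // Nat.card C.supp = i} :=
        (Nat.card_ne_zero.mp hi).1
      obtain ⟨⟨C, hC⟩⟩ := hne'
      have hsupp : C.supp = Set.univ := by
        ext u
        simp only [ConnectedComponent.mem_supp_iff, Set.mem_univ, iff_true]
        exact (hall _).trans (hall C).symm
      have h1 : Nat.card C.supp = (Xᶜ).ncard := by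
        rw [hsupp, Nat.card_coe_set_eq, Set.ncard_univ, ← Nat.card_coe_set_eq]
      omega
    by_cases h0 : cCount (Hgraph n) X 1 = 0 ∧ cCount (Hgraph n) X 3 = 0
        ∧ cCount (Hgraph n) X 5 = 0 ∧ cCount (Hgraph n) X 7 = 0
    · obtain ⟨e1, e3, e5, e7⟩ := h0
      rw [e1, e3, e5, e7]
      have : (0 : ℚ) ≤ (X.ncard : ℚ) := by positivity
      norm_num
      linarith
    · have h21 := hkey h0
      have l1 := hle 1
      have l3 := hle 3
      have l5 := hle 5
      have l7 := hle 7
      have c1 : (cCount (Hgraph n) X 1 : ℚ) ≤ 1 := by exact_mod_cast l1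
      have c3 : (cCount (Hgraph n) X 3 : ℚ) ≤ 1 := by exact_mod_cast l3
      have c5 : (cCount (Hgraph n) X 5 : ℚ) ≤ 1 := by exact_mod_cast l5
      have c7 : (cCount (Hgraph n) X 7 : ℚ) ≤ 1 := by exact_mod_cast l7
      have c21 : (21 : ℚ) ≤ (X.ncard : ℚ) := by exact_mod_cast h21
      linarith
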